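/- arXiv:1910.05690 — 2 statements merged into one kernel-verified Lean document; each statement's English description precedes it below -/
import Mathlib

section
/- Under the D-module isomorphism Φ : M → (M/MD_+) ⊗_k D sending m to Σ_{n≥0} (∇^n m)_0 ⊗ x^{[n]}, the q-connection ∇ on M corresponds to the map 1 ⊗ d, where d(x^{[n]}) = x^{[n-1]}. -/
/-! Since `∇` lowers the degree and kills degree `0`, every element of `M` is killed by a power
of `∇`, so `Φ x` is a finite sum. Then `Φ (∇ x) = ∑ (∇^(n+1) x)₀ ⊗ x^{[n]}`, which is
`(1 ⊗ d) (Φ x)` because `d` lowers the index of `x^{[n]}` by one and kills `x^{[0]}`. -/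

open TensorProduct

noncomputable def qPoly (n : ℕ) : Polynomial ℤ :=
  ∑ i ∈ Finset.range n, Polynomial.X ^ i

noncomputable def qFact (n : ℕ) : Polynomial ℤ :=
  ∏ i ∈ Finset.range n, qPoly (i + 1)

noncomputable def gaussPoly (n m : ℕ) : Polynomial ℤ :=
  Polynomial.divByMonic (qFact n) (qFact m * qFact (n - m))

noncomputable def qBinom (k : Type*) [CommRing k] (q : k) (n m : ℕ) : k :=
  Polynomial.eval₂ (Int.castRingHom k) q (gaussPoly n m)

/-- Right multiplication on the `q`-divided power algebra `D = ⊕ k·x^{[n]}` (realized as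
`ℕ →₀ k`): `x^{[a]}·x^{[b]} = [a+b choose a]_q x^{[a+b]}`. -/
noncomputable def mulRightL {k : Type*} [CommRing k] (q : k) (g : ℕ →₀ k) :
    (ℕ →₀ k) →ₗ[k] (ℕ →₀ k) :=
  Finsupp.lsum k fun a =>
    g.sum fun b cb =>
      (qBinom k q (a + b) a * cb) • (Finsupp.lsingle (a + b) : k →ₗ[k] (ℕ →₀ k))

/-- The multiplication of the `q`-divided power algebra `D`. -/
noncomputable def Dmul {k : Type*} [CommRing k] (q : k) (f g : ℕ →₀ k) : ℕ →₀ k :=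
  mulRightL q g f

/-- The degree `-1` map `d : D → D`, `x^{[n]} ↦ x^{[n-1]}` (and `x^{[0]} ↦ 0`). -/
noncomputable def DdL {k : Type*} [CommRing k] : (ℕ →₀ k) →ₗ[k] (ℕ →₀ k) :=
  Finsupp.lsum k fun a =>
    if a = 0 then 0 else (Finsupp.lsingle (a - 1) : k →ₗ[k] (ℕ →₀ k))

namespace Module.End

variable {R M : Type*} [Semiring R] [AddCommMonoid M] [Module R M]
  {ℳ : ℕ → Submodule R M} {f : Module.End R M}

theorem pow_succ_apply_eq_zero_of_mem_of_lowers_degree (h0 : ∀ x ∈ ℳ 0, f x = 0)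
    (hdeg : ∀ n, ∀ x ∈ ℳ (n + 1), f x ∈ ℳ n) :
    ∀ n, ∀ x ∈ ℳ n, (f ^ (n + 1)) x = 0
  | 0, x, hx => by simpa using h0 x hx
  | n + 1, x, hx => by
    rw [pow_succ, mul_apply, pow_succ_apply_eq_zero_of_mem_of_lowers_degree h0 hdeg n _
      (hdeg n x hx)]

theorem exists_pow_apply_eq_zero_of_lowers_degree (hℳ : iSup ℳ = ⊤)
    (h0 : ∀ x ∈ ℳ 0, f x = 0) (hdeg : ∀ n, ∀ x ∈ ℳ (n + 1), f x ∈ ℳ n) (x : M) :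
    ∃ N, (f ^ N) x = 0 := by
  have hx : x ∈ iSup ℳ := hℳ ▸ Submodule.mem_top
  induction hx using Submodule.iSup_induction' with
  | mem n y hy => exact ⟨n + 1, pow_succ_apply_eq_zero_of_mem_of_lowers_degree h0 hdeg n y hy⟩
  | zero => exact ⟨0, map_zero _⟩
  | add y z _ _ hy hz =>
    obtain ⟨Ny, hNy⟩ := hy
    obtain ⟨Nz, hNz⟩ := hz
    refine ⟨max Ny Nz, ?_⟩
    rw [map_add, pow_map_zero_of_le (le_max_left _ _) hNy,
      pow_map_zero_of_le (le_max_right _ _) hNz, add_zero]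

end Module.End

section DividedPowers

variable {k V : Type*} [CommRing k] [AddCommGroup V] [Module k V]

@[simp]
theorem DdL_single_zero (c : k) : DdL (Finsupp.single 0 c) = 0 := by
  simp [DdL]

@[simp]
theorem DdL_single_succ (n : ℕ) (c : k) :
    DdL (Finsupp.single (n + 1) c) = Finsupp.single n c := by
  simp [DdL]

theorem finsum_tmul_single_eq_sum_range (v : ℕ → V) {N : ℕ} (hv : ∀ n ≥ N, v n = 0) :
    ∑ᶠ n, v n ⊗ₜ[k] Finsupp.single n (1 : k) =
      ∑ n ∈ Finset.range N, v n ⊗ₜ[k] Finsupp.single n (1 : k) := by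
  refine finsum_eq_finsetSum_of_support_subset _ fun n hn => ?_
  by_contra hN
  simp_all

theorem map_id_DdL_finsum_tmul_single (v : ℕ → V) {N : ℕ} (hv : ∀ n ≥ N, v n = 0) :
    map LinearMap.id DdL (∑ᶠ n, v n ⊗ₜ[k] Finsupp.single n (1 : k)) =
      ∑ᶠ n, v (n + 1) ⊗ₜ[k] Finsupp.single n (1 : k) := by
  rw [finsum_tmul_single_eq_sum_range v (N := N + 1) fun n hn => hv n (by omega),
    finsum_tmul_single_eq_sum_range (fun n => v (n + 1)) (N := N) fun n hn => hv _ (by omega),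
    map_sum, Finset.sum_range_succ']
  simp

end DividedPowers

theorem qConnection_corresponds_to_one_tensor_d_general {k : Type*} [Field k]
    {M : Type*} [AddCommGroup M] [Module k M]
    (act : M →ₗ[k] (ℕ →₀ k) →ₗ[k] M)
    (ℳ : ℕ → Submodule k M)
    (hdecomp : DirectSum.IsInternal ℳ)
    (conn : Module.End k M)
    (hconn0 : ∀ x ∈ ℳ 0, conn x = 0)
    (hconndeg : ∀ n : ℕ, ∀ x ∈ ℳ (n + 1), conn x ∈ ℳ n) :
    let MD : Submodule k M :=
      Submodule.span k {y : M | ∃ (x : M) (f : ℕ →₀ k), f 0 = 0 ∧ y = act x f};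
    let Φ : M → (M ⧸ MD) ⊗[k] (ℕ →₀ k) := fun x =>
      ∑ᶠ n : ℕ, (MD.mkQ ((conn ^ n) x)) ⊗ₜ[k] Finsupp.single n (1 : k);
    ∀ x : M, Φ (conn x) = TensorProduct.map LinearMap.id DdL (Φ x) := by
  intro MD Φ x
  obtain ⟨N, hN⟩ := Module.End.exists_pow_apply_eq_zero_of_lowers_degree
    hdecomp.submodule_iSup_eq_top hconn0 hconndeg x
  have hvanish : ∀ n ≥ N, MD.mkQ ((conn ^ n) x) = 0 := fun n hn => by
    rw [Module.End.pow_map_zero_of_le hn hN, map_zero]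
  simp only [Φ, map_id_DdL_finsum_tmul_single _ hvanish, pow_succ, Module.End.mul_apply]

/-- Under the `D`-module isomorphism `Φ : M → (M/MD_+) ⊗_k D`,
`Φ(x) = ∑_{n≥0} (conn^n x)_0 ⊗ x^{[n]}`, the `q`-connection `conn` on `M` corresponds to
`1 ⊗ d`, where `d(x^{[n]}) = x^{[n-1]}`. -/
theorem qConnection_corresponds_to_one_tensor_d {k : Type*} [Field k] (q : k)
    {M : Type*} [AddCommGroup M] [Module k M]
    (act : M →ₗ[k] (ℕ →₀ k) →ₗ[k] M)
    (hactmul : ∀ (x : M) (f g : ℕ →₀ k), act (act x f) g = act x (Dmul q f g))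
    (hact1 : ∀ x : M, act x (Finsupp.single 0 1) = x)
    (ℳ : ℕ → Submodule k M)
    (hdecomp : DirectSum.IsInternal ℳ)
    (hgr : ∀ (n m : ℕ) (c : k), ∀ x ∈ ℳ n, act x (Finsupp.single m c) ∈ ℳ (n + m))
    (conn : Module.End k M)
    (hconn0 : ∀ x ∈ ℳ 0, conn x = 0)
    (hconndeg : ∀ n : ℕ, ∀ x ∈ ℳ (n + 1), conn x ∈ ℳ n)
    (hconn : ∀ (m : ℕ) (c : k) (x : M),
      conn (act x (Finsupp.single m c)) =
        act x (DdL (Finsupp.single m c)) + q ^ m • act (conn x) (Finsupp.single m c)) :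
    let MD : Submodule k M :=
      Submodule.span k {y : M | ∃ (x : M) (f : ℕ →₀ k), f 0 = 0 ∧ y = act x f};
    let Φ : M → (M ⧸ MD) ⊗[k] (ℕ →₀ k) := fun x =>
      ∑ᶠ n : ℕ, (MD.mkQ ((conn ^ n) x)) ⊗ₜ[k] Finsupp.single n (1 : k);
    ∀ x : M, Φ (conn x) = TensorProduct.map LinearMap.id DdL (Φ x) :=
  qConnection_corresponds_to_one_tensor_d_general act ℳ hdecomp conn hconn0 hconndeg
end

section
/- Let k be a field of characteristic ℓ > 0 and let q ∈ k be a root of unity of order w. Define b_0 = 1 and, if w > 1, b_i = w·ℓ^{i-1} for i > 0; if w = 1, b_i = ℓ^i. Then the k-algebra homomorphism k[y_0, y_1, ...]/(y_i^{b_{i+1}/b_i}) → D given by y_i ↦ x^{[b_i]} is an isomorphism onto the q-divided power algebra D. -/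
/-- The sequence `b_0 = 1`, and for `i > 0`: `b_i = w·ℓ^{i-1}` if `w > 1`, `b_i = ℓ^i`
if `w = 1`. -/
def bSeq (w ℓ : ℕ) : ℕ → ℕ := fun i =>
  if i = 0 then 1 else if 1 < w then w * ℓ ^ (i - 1) else ℓ ^ i

/-- Powers in the `q`-divided power algebra `D`. -/
noncomputable def Dpow {k : Type*} [CommRing k] (q : k) (f : ℕ →₀ k) : ℕ → (ℕ →₀ k)
  | 0 => Finsupp.single 0 1
  | n + 1 => Dmul q (Dpow q f n) f

/-- The image in `D` of the monomial `∏ y_i^{m i}` under `y_i ↦ x^{[b i]}`. -/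
noncomputable def Dmon {k : Type*} [CommRing k] (q : k) (b : ℕ → ℕ) (m : ℕ →₀ ℕ) :
    ℕ →₀ k :=
  (List.range (m.support.sup id + 1)).foldr
    (fun i acc => Dmul q (Dpow q (Finsupp.single (b i) (1 : k)) (m i)) acc)
    (Finsupp.single 0 1)


/-!
Multiplication in `D` is governed by the Gaussian binomials: `x^{[n]} x^{[m]} = [n+m choose n]_q
x^{[n+m]}`. The heart of the proof is a `q`-analogue of Kummer's theorem: `[n+m choose n]_q ≠ 0`
in `k` exactly when adding `n` and `m` in the mixed radix with place values `b_0, b_1, …` (whose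
`i`-th digit ranges below `b_{i+1}/b_i`) produces no carry. It follows from Kummer's theorem at
`ℓ` and the `q`-Lucas theorem: for `d < w`, `[wc+d choose m]_q` equals
`C(c, ⌊m/w⌋) · [d choose m mod w]_q` up to a power of `q`, which is read off from the product
`∏_{i<n} (1 + q^i X)` using `∏_{i<w} (1 + q^i X) = 1 + u X^w`.

Hence a monomial `∏ y_i^{m_i}` whose exponents are digits (`m_i < b_{i+1}/b_i`) is sent to a
nonzero multiple of `x^{[∑ m_i b_i]}`, while `y_i^{b_{i+1}/b_i}` is sent to `0`, since building it
up from `y_i^{b_{i+1}/b_i - 1}` carries into place `i + 1`. The monomials with digit exponents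
span the quotient, and mixed-radix expansions exist and are unique, so they are sent bijectively,
up to nonzero scalars, onto the basis `(x^{[n]})` of `D`.
-/

/-! ### Gaussian polynomials -/

section GaussianPolynomials

open Polynomial

/-- `gaussPoly` through the `q`-Pascal rule instead of division. -/
noncomputable def qChoose : ℕ → ℕ → ℤ[X]
  | _, 0 => 1
  | 0, _ + 1 => 0
  | n + 1, m + 1 => qChoose n (m + 1) + X ^ (n - m) * qChoose n m

@[simp] lemma qChoose_zero_right (n : ℕ) : qChoose n 0 = 1 := by cases n <;> rfl

lemma qChoose_succ_succ (n m : ℕ) :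
    qChoose (n + 1) (m + 1) = qChoose n (m + 1) + X ^ (n - m) * qChoose n m := rfl

lemma qChoose_eq_zero_of_lt {n m : ℕ} (h : n < m) : qChoose n m = 0 := by
  induction n generalizing m with
  | zero => obtain ⟨m, rfl⟩ := Nat.exists_eq_succ_of_ne_zero h.ne'; rfl
  | succ n ih =>
    obtain ⟨m, rfl⟩ := Nat.exists_eq_succ_of_ne_zero (Nat.ne_zero_of_lt h)
    rw [qChoose_succ_succ, ih (by omega), ih (by omega), mul_zero, add_zero]

@[simp] lemma qChoose_self (n : ℕ) : qChoose n n = 1 := by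
  induction n with
  | zero => rfl
  | succ n ih => rw [qChoose_succ_succ, qChoose_eq_zero_of_lt n.lt_succ_self, ih]; simp

lemma qPoly_add (a b : ℕ) : qPoly (a + b) = qPoly a + X ^ a * qPoly b := by
  simp only [qPoly, Finset.sum_range_add, Finset.mul_sum, pow_add]

lemma qFact_succ (n : ℕ) : qFact (n + 1) = qFact n * qPoly (n + 1) :=
  Finset.prod_range_succ _ _

lemma qFact_monic (n : ℕ) : (qFact n).Monic :=
  monic_prod_of_monic _ _ fun _ _ => monic_geom_sum_X (Nat.succ_ne_zero _)

lemma qFact_mul_qFact_mul_qChoose (a b : ℕ) :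
    qFact a * qFact b * qChoose (a + b) a = qFact (a + b) := by
  induction a generalizing b with
  | zero => simp [qFact]
  | succ a iha =>
    induction b with
    | zero => simp [qFact]
    | succ b ihb =>
      have h := iha (b + 1)
      rw [← add_assoc] at h
      rw [Nat.add_right_comm] at ihb
      rw [show a + 1 + (b + 1) = a + b + 1 + 1 by omega, qChoose_succ_succ,
        show a + b + 1 - a = b + 1 by omega, qFact_succ (a + b + 1),
        show a + b + 1 + 1 = b + 1 + (a + 1) by omega, qPoly_add]
      linear_combination qPoly (b + 1) * ihb + X ^ (b + 1) * qPoly (a + 1) * h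
        + qFact (a + 1) * qChoose (a + b + 1) (a + 1) * qFact_succ b
        + X ^ (b + 1) * qFact (b + 1) * qChoose (a + b + 1) a * qFact_succ a

lemma gaussPoly_add_eq_qChoose (a b : ℕ) : gaussPoly (a + b) a = qChoose (a + b) a := by
  rw [gaussPoly, Nat.add_sub_cancel_left, ← qFact_mul_qFact_mul_qChoose a b]
  exact mul_divByMonic_cancel_left _ ((qFact_monic a).mul (qFact_monic b))

lemma qChoose_add_comm (a b : ℕ) : qChoose (a + b) a = qChoose (a + b) b := by
  refine mul_left_cancel₀ ((qFact_monic a).mul (qFact_monic b)).ne_zero ?_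
  rw [qFact_mul_qFact_mul_qChoose, mul_comm (qFact a), add_comm, qFact_mul_qFact_mul_qChoose]

lemma qChoose_mul_qChoose (a b c : ℕ) :
    qChoose (a + b) a * qChoose (a + b + c) (a + b)
      = qChoose (b + c) b * qChoose (a + b + c) a := by
  refine mul_left_cancel₀ (((qFact_monic a).mul (qFact_monic b)).mul (qFact_monic c)).ne_zero ?_
  have h₁ := qFact_mul_qFact_mul_qChoose a b
  have h₂ := qFact_mul_qFact_mul_qChoose (a + b) c
  have h₃ := qFact_mul_qFact_mul_qChoose b c
  have h₄ := qFact_mul_qFact_mul_qChoose a (b + c)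
  rw [← add_assoc] at h₄
  linear_combination qFact c * qChoose (a + b + c) (a + b) * h₁ + h₂
    - qFact a * qChoose (a + b + c) a * h₃ - h₄

section CommRing

variable {k : Type*} [CommRing k]

lemma qBinom_add_eq_aeval (q : k) (a b : ℕ) :
    qBinom k q (a + b) a = aeval q (qChoose (a + b) a) := by
  rw [qBinom, gaussPoly_add_eq_qChoose, aeval_def, algebraMap_int_eq]

lemma qBinom_add_comm (q : k) (a b : ℕ) : qBinom k q (a + b) a = qBinom k q (b + a) b := by
  rw [qBinom_add_eq_aeval, qBinom_add_eq_aeval, qChoose_add_comm, add_comm]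

lemma qBinom_add_zero (q : k) (a : ℕ) : qBinom k q (a + 0) a = 1 := by
  rw [qBinom_add_eq_aeval, add_zero, qChoose_self, map_one]

lemma qBinom_mul_qBinom (q : k) (a b c : ℕ) :
    qBinom k q (a + b) a * qBinom k q (a + b + c) (a + b)
      = qBinom k q (b + c) b * qBinom k q (a + b + c) a := by
  rw [qBinom_add_eq_aeval q a b, qBinom_add_eq_aeval q (a + b) c, qBinom_add_eq_aeval q b c,
    add_assoc, qBinom_add_eq_aeval q a (b + c), ← add_assoc, ← map_mul, ← map_mul,
    qChoose_mul_qChoose]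

/-- The `q`-Pochhammer symbol `(-X; q)_n`. -/
noncomputable def qPochhammer (q : k) (n : ℕ) : k[X] :=
  ∏ i ∈ Finset.range n, (1 + C (q ^ i) * X)

theorem coeff_qPochhammer (q : k) (n m : ℕ) :
    (qPochhammer q n).coeff m = q ^ m.choose 2 * aeval q (qChoose n m) := by
  induction n generalizing m with
  | zero => cases m <;> simp [qPochhammer, qChoose, coeff_one]
  | succ n ih =>
    rw [qPochhammer, Finset.prod_range_succ, ← qPochhammer, mul_add, mul_one, coeff_add]
    cases m with
    | zero => simp [ih, mul_comm _ X]
    | succ m =>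
      rw [mul_comm (C _) X, ← mul_assoc, coeff_mul_C, coeff_mul_X, ih, ih, qChoose_succ_succ,
        map_add, map_mul, map_pow, aeval_X, Nat.choose_succ_succ', Nat.choose_one_right]
      rcases le_or_gt m n with h | h
      · rw [show q ^ n = q ^ m * q ^ (n - m) by rw [← pow_add, Nat.add_sub_cancel' h]]
        ring
      · rw [qChoose_eq_zero_of_lt h, qChoose_eq_zero_of_lt (by omega : n < m + 1)]
        simp

lemma natDegree_qPochhammer_le (q : k) (d : ℕ) : (qPochhammer q d).natDegree ≤ d :=
  natDegree_le_iff_coeff_eq_zero.2 fun _ h => by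
    rw [coeff_qPochhammer, qChoose_eq_zero_of_lt h, map_zero, mul_zero]

end CommRing

lemma coeff_expand_mul_of_natDegree_lt {R : Type*} [CommSemiring R] {w : ℕ} (hw : 0 < w)
    (f : R[X]) {g : R[X]} (hg : g.natDegree < w) (m : ℕ) :
    (expand R w f * g).coeff m = f.coeff (m / w) * g.coeff (m % w) := by
  induction f using Polynomial.induction_on' with
  | add f f' hf hf' => rw [map_add, add_mul, coeff_add, hf, hf', coeff_add, add_mul]
  | monomial j a =>
    rw [expand_monomial, ← C_mul_X_pow_eq_monomial, mul_assoc, coeff_C_mul, coeff_X_pow_mul',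
      coeff_monomial]
    by_cases hj : j = m / w
    · rw [if_pos (hj ▸ Nat.div_mul_le_self m w), if_pos hj, hj, ← Nat.mod_eq_sub_div_mul]
    · rw [if_neg hj, zero_mul]
      split_ifs with hjm
      · have hlt : j + 1 ≤ m / w := lt_of_le_of_ne ((Nat.le_div_iff_mul_le hw).2 hjm) hj
        have := Nat.mul_le_mul_right w hlt
        have := Nat.div_mul_le_self m w
        rw [coeff_eq_zero_of_natDegree_lt (by rw [add_mul] at *; omega), mul_zero]
      · rw [mul_zero]

lemma coeff_one_add_C_mul_X_pow {R : Type*} [CommRing R] (u : R) (c t : ℕ) :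
    ((1 + C u * X) ^ c).coeff t = u ^ t * c.choose t := by
  rw [add_comm, add_pow]
  simp only [mul_pow, ← C_pow, one_pow, mul_one, ← C_eq_natCast, finsetSum_coeff,
    mul_right_comm _ (X ^ _), ← C_mul, coeff_C_mul_X_pow]
  rw [Finset.sum_ite_eq]
  split_ifs with h
  · rfl
  · rw [Nat.choose_eq_zero_of_lt (by simpa using h), Nat.cast_zero, mul_zero]

/-! ### The `q`-Lucas theorem and carries -/

section RootOfUnity

variable {k : Type*} [Field k] {q : k} {w : ℕ}

lemma aeval_qPoly (q : k) (n : ℕ) : aeval q (qPoly n) = ∑ i ∈ Finset.range n, q ^ i := by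
  simp [qPoly]

lemma aeval_qFact_ne_zero (hq : orderOf q = w) {n : ℕ} (hn : n < w) :
    aeval q (qFact n) ≠ 0 := by
  rw [qFact, map_prod, Finset.prod_ne_zero_iff]
  intro i hi h
  have hgeom := geom_sum_mul q (i + 1)
  rw [← aeval_qPoly, h, zero_mul, eq_comm, sub_eq_zero] at hgeom
  exact pow_ne_one_of_lt_orderOf (Nat.succ_ne_zero i) (by simp at hi; omega) hgeom

lemma aeval_qFact_orderOf (hq : orderOf q = w) (hw : 1 < w) : aeval q (qFact w) = 0 := by
  rw [qFact, map_prod]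
  refine Finset.prod_eq_zero (Finset.mem_range.2 (Nat.sub_lt (by omega) one_pos)) ?_
  rw [Nat.sub_add_cancel (by omega), aeval_qPoly, ← hq]
  exact (IsPrimitiveRoot.orderOf q).geom_sum_eq_zero (hq ▸ hw)

lemma aeval_qChoose_add_ne_zero (hq : orderOf q = w) {a b : ℕ} (h : a + b < w) :
    aeval q (qChoose (a + b) a) ≠ 0 := by
  have := congrArg (aeval q) (qFact_mul_qFact_mul_qChoose a b)
  rw [map_mul] at this
  exact right_ne_zero_of_mul (this ▸ aeval_qFact_ne_zero hq h)

lemma aeval_qChoose_orderOf (hq : orderOf q = w) {j : ℕ} (hj₀ : 0 < j) (hj : j < w) :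
    aeval q (qChoose w j) = 0 := by
  obtain ⟨t, rfl⟩ := Nat.exists_eq_add_of_le hj.le
  have h := congrArg (aeval q) (qFact_mul_qFact_mul_qChoose j t)
  rw [map_mul, map_mul, aeval_qFact_orderOf hq (by omega)] at h
  exact (mul_eq_zero.1 h).resolve_left
    (mul_ne_zero (aeval_qFact_ne_zero hq hj) (aeval_qFact_ne_zero hq (by omega)))

lemma qPochhammer_orderOf (hq : orderOf q = w) (hw : 0 < w) :
    qPochhammer q w = expand k w (1 + C (q ^ w.choose 2) * X) := by
  ext m
  rw [coeff_qPochhammer, map_add, map_one, map_mul, expand_C, expand_X, coeff_add, coeff_one,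
    coeff_C_mul, coeff_X_pow]
  rcases Nat.lt_trichotomy m w with h | rfl | h
  · rcases m.eq_zero_or_pos with rfl | hm
    · simp [hw.ne]
    · simp [aeval_qChoose_orderOf hq hm h, hm.ne', h.ne]
  · simp [hw.ne']
  · simp [qChoose_eq_zero_of_lt h, h.ne', (hw.trans h).ne']

lemma qPochhammer_orderOf_mul_add (hq : orderOf q = w) (c d : ℕ) :
    qPochhammer q (w * c + d) = qPochhammer q w ^ c * qPochhammer q d := by
  induction c with
  | zero => simp
  | succ c ih =>
    have hperiodic :
        qPochhammer q (w + (w * c + d)) = qPochhammer q w * qPochhammer q (w * c + d) := by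
      simp only [qPochhammer, Finset.prod_range_add, pow_add, ← hq, pow_orderOf_eq_one, one_mul]
    rw [mul_add_one, add_right_comm, add_comm, hperiodic, ih, pow_succ', mul_assoc]

theorem qLucas (hq : orderOf q = w) (hw : 0 < w) {d : ℕ} (hd : d < w) (c m : ℕ) :
    q ^ m.choose 2 * aeval q (qChoose (w * c + d) m)
      = (q ^ w.choose 2) ^ (m / w) * c.choose (m / w)
        * (q ^ (m % w).choose 2 * aeval q (qChoose d (m % w))) := by
  rw [← coeff_qPochhammer, ← coeff_qPochhammer, qPochhammer_orderOf_mul_add hq,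
    qPochhammer_orderOf hq hw, ← map_pow,
    coeff_expand_mul_of_natDegree_lt hw _ ((natDegree_qPochhammer_le q d).trans_lt hd),
    coeff_one_add_C_mul_X_pow]

theorem aeval_qChoose_eq_zero_iff (hq : orderOf q = w) (hw : 0 < w) {d : ℕ} (hd : d < w)
    (c m : ℕ) :
    aeval q (qChoose (w * c + d) m) = 0
      ↔ (c.choose (m / w) : k) = 0 ∨ aeval q (qChoose d (m % w)) = 0 := by
  have hq₀ : q ≠ 0 := (orderOf_pos_iff.1 (hq ▸ hw)).isUnit.ne_zero
  rw [← mul_right_inj' (pow_ne_zero (m.choose 2) hq₀), mul_zero, qLucas hq hw hd]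
  simp [hq₀]

end RootOfUnity

theorem cast_choose_add_ne_zero_iff {R : Type*} [AddGroupWithOne R] {ℓ : ℕ} [CharP R ℓ]
    (hℓ : ℓ.Prime) (n m : ℕ) :
    ((m + n).choose n : R) ≠ 0 ↔ ∀ i, n % ℓ ^ i + m % ℓ ^ i < ℓ ^ i := by
  have := Fact.mk hℓ
  rw [Ne, CharP.cast_eq_zero_iff R ℓ, dvd_iff_padicValNat_ne_zero (Nat.choose_pos (by omega)).ne',
    not_not, padicValNat_choose' (Nat.lt_succ_self _), Finset.card_eq_zero,
    Finset.filter_eq_empty_iff]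
  refine ⟨fun h i => ?_, fun h i _ => (h i).not_ge⟩
  rcases Nat.lt_or_ge i (Nat.log ℓ (m + n)).succ with hi | hi
  · rcases i.eq_zero_or_pos with rfl | hi₀
    · simp [Nat.mod_one]
    · exact not_le.1 (h (Finset.mem_Ico.2 ⟨hi₀, hi⟩))
  · have := (Nat.lt_pow_succ_log_self hℓ.one_lt (m + n)).trans_le
      (Nat.pow_le_pow_right hℓ.pos hi)
    have := Nat.mod_le n (ℓ ^ i)
    have := Nat.mod_le m (ℓ ^ i)
    omega

lemma mod_mul_add_mod_mul_lt_iff {w L n m : ℕ} (h : n % w + m % w < w) :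
    n % (w * L) + m % (w * L) < w * L ↔ n / w % L + m / w % L < L := by
  rw [Nat.mod_mul, Nat.mod_mul]
  constructor
  · intro h'
    by_contra hL
    have := Nat.mul_le_mul_left w (not_lt.1 hL)
    rw [mul_add] at this
    omega
  · intro h'
    have := Nat.mul_le_mul_left w (Nat.succ_le_of_lt h')
    rw [Nat.succ_eq_add_one, mul_add, mul_add, mul_one] at this
    omega

theorem qBinom_add_ne_zero_iff {k : Type*} [Field k] {q : k} {w ℓ : ℕ} [CharP k ℓ]
    (hℓ : ℓ.Prime) (hq : orderOf q = w) (hw : 0 < w) (n m : ℕ) :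
    qBinom k q (n + m) n ≠ 0 ↔ ∀ i, n % (w * ℓ ^ i) + m % (w * ℓ ^ i) < w * ℓ ^ i := by
  have hn := Nat.div_add_mod n w
  have hm := Nat.div_add_mod m w
  have hn' := Nat.mod_lt n hw
  have hm' := Nat.mod_lt m hw
  rw [qBinom_add_eq_aeval]
  by_cases hc : n % w + m % w < w
  · have hsum : n + m = w * (m / w + n / w) + (n % w + m % w) := by rw [mul_add]; omega
    rw [Ne, hsum, aeval_qChoose_eq_zero_iff hq hw hc,
      or_iff_left (aeval_qChoose_add_ne_zero hq hc), ← Ne, cast_choose_add_ne_zero_iff hℓ]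
    simp only [mod_mul_add_mod_mul_lt_iff hc]
  · -- a carry in place `0`: then `n + m = w c + d` with `d < n % w`
    have hsum : n + m = w * (n / w + m / w + 1) + (n % w + m % w - w) := by
      rw [mul_add, mul_add, mul_one]; omega
    have hzero : aeval q (qChoose (w * (n / w + m / w + 1) + (n % w + m % w - w)) n) = 0 :=
      (aeval_qChoose_eq_zero_iff hq hw (by omega) _ _).2
        (Or.inr (by rw [qChoose_eq_zero_of_lt (by omega), map_zero]))
    rw [hsum, hzero, ne_self_iff_false, false_iff, not_forall]
    exact ⟨0, by simpa using hc⟩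

end GaussianPolynomials

lemma foldr_mul_eq_prod_range {M : Type*} [CommMonoid M] (g : ℕ → M) (N : ℕ) :
    (List.range N).foldr (fun i acc => g i * acc) 1 = ∏ i ∈ Finset.range N, g i := by
  rw [Finset.prod_eq_multiset_prod, Finset.range_val, Multiset.range, Multiset.map_coe,
    Multiset.prod_coe, List.prod_eq_foldr, List.foldr_map]

/-! ### The algebra `D` -/

section Dmul

variable {k : Type*} [CommRing k] {q : k}

lemma mulRightL_add (g g' : ℕ →₀ k) :
    mulRightL q (g + g') = mulRightL q g + mulRightL q g' := by
  refine Finsupp.lhom_ext fun a c => ?_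
  simp only [mulRightL, LinearMap.add_apply, Finsupp.lsum_single]
  rw [Finsupp.sum_add_index' (fun _ => by simp) (fun _ _ _ => by rw [mul_add, add_smul]),
    LinearMap.add_apply]

lemma mulRightL_smul (c : k) (g : ℕ →₀ k) : mulRightL q (c • g) = c • mulRightL q g := by
  refine Finsupp.lhom_ext fun a d => ?_
  simp only [mulRightL, LinearMap.smul_apply, Finsupp.lsum_single]
  rw [Finsupp.sum_smul_index' (fun _ => by simp), ← LinearMap.smul_apply, Finsupp.smul_sum]
  simp only [smul_eq_mul, mul_left_comm _ c, mul_smul]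

lemma mulRightL_zero : mulRightL q (0 : ℕ →₀ k) = 0 :=
  Finsupp.lhom_ext fun a c => by simp [mulRightL]

lemma Dmul_single (a b : ℕ) (c d : k) :
    Dmul q (Finsupp.single a c) (Finsupp.single b d)
      = Finsupp.single (a + b) (qBinom k q (a + b) a * c * d) := by
  rw [Dmul, mulRightL, Finsupp.lsum_single, Finsupp.sum_single_index (by simp),
    LinearMap.smul_apply, Finsupp.lsingle_apply, Finsupp.smul_single, smul_eq_mul,
    mul_right_comm]

lemma Dmul_add_left (f f' g : ℕ →₀ k) : Dmul q (f + f') g = Dmul q f g + Dmul q f' g :=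
  map_add _ f f'

lemma Dmul_add_right (f g g' : ℕ →₀ k) : Dmul q f (g + g') = Dmul q f g + Dmul q f g' := by
  rw [Dmul, mulRightL_add]; rfl

lemma Dmul_zero_left (g : ℕ →₀ k) : Dmul q 0 g = 0 := map_zero _

lemma Dmul_zero_right (f : ℕ →₀ k) : Dmul q f 0 = 0 := by
  rw [Dmul, mulRightL_zero]; rfl

lemma Dmul_smul_left (c : k) (f g : ℕ →₀ k) : Dmul q (c • f) g = c • Dmul q f g :=
  map_smul _ c f

lemma Dmul_smul_right (c : k) (f g : ℕ →₀ k) : Dmul q f (c • g) = c • Dmul q f g := by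
  rw [Dmul, mulRightL_smul]; rfl

lemma Dmul_one (f : ℕ →₀ k) : Dmul q f (Finsupp.single 0 1) = f := by
  induction f using Finsupp.induction_linear with
  | zero => exact Dmul_zero_left _
  | add f f' hf hf' => rw [Dmul_add_left, hf, hf']
  | single a c => rw [Dmul_single, qBinom_add_zero, one_mul, mul_one, add_zero]

lemma Dmul_comm (f g : ℕ →₀ k) : Dmul q f g = Dmul q g f := by
  induction f using Finsupp.induction_linear with
  | zero => rw [Dmul_zero_left, Dmul_zero_right]
  | add f f' hf hf' => rw [Dmul_add_left, Dmul_add_right, hf, hf']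
  | single a c =>
    induction g using Finsupp.induction_linear with
    | zero => rw [Dmul_zero_left, Dmul_zero_right]
    | add g g' hg hg' => rw [Dmul_add_left, Dmul_add_right, hg, hg']
    | single b d => rw [Dmul_single, Dmul_single, qBinom_add_comm, add_comm, mul_right_comm]

lemma Dmul_assoc (f g h : ℕ →₀ k) : Dmul q (Dmul q f g) h = Dmul q f (Dmul q g h) := by
  induction f using Finsupp.induction_linear with
  | zero => simp only [Dmul_zero_left]
  | add f f' hf hf' => simp only [Dmul_add_left, hf, hf']
  | single a c =>
    induction g using Finsupp.induction_linear with
    | zero => simp only [Dmul_zero_left, Dmul_zero_right]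
    | add g g' hg hg' => simp only [Dmul_add_left, Dmul_add_right, hg, hg']
    | single b d =>
      induction h using Finsupp.induction_linear with
      | zero => simp only [Dmul_zero_right]
      | add h h' hh hh' => simp only [Dmul_add_right, hh, hh']
      | single e r =>
        rw [Dmul_single, Dmul_single, Dmul_single, Dmul_single, ← add_assoc]
        congr 1
        linear_combination c * d * r * qBinom_mul_qBinom q a b e

end Dmul

/-- The `q`-divided power algebra: a type synonym of `ℕ →₀ k`, which already carries the
pointwise multiplication. -/
def QDivPow {k : Type*} [CommRing k] (_q : k) : Type _ := ℕ →₀ k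

namespace QDivPow

variable {k : Type*} [CommRing k] {q : k}

noncomputable instance : AddCommGroup (QDivPow q) := inferInstanceAs (AddCommGroup (ℕ →₀ k))

noncomputable instance : Module k (QDivPow q) := inferInstanceAs (Module k (ℕ →₀ k))

noncomputable instance : CommRing (QDivPow q) where
  __ := (inferInstance : AddCommGroup (QDivPow q))
  mul := Dmul q
  one := Finsupp.single 0 1
  left_distrib := Dmul_add_right
  right_distrib := Dmul_add_left
  zero_mul := Dmul_zero_left
  mul_zero := Dmul_zero_right
  mul_assoc := Dmul_assoc
  one_mul f := (Dmul_comm _ _).trans (Dmul_one f)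
  mul_one := Dmul_one
  mul_comm := Dmul_comm
  npow n f := Dpow q f n
  npow_zero _ := rfl
  npow_succ _ _ := rfl

noncomputable instance : Algebra k (QDivPow q) :=
  Algebra.ofModule Dmul_smul_left Dmul_smul_right

variable (q) in
noncomputable def divPow (n : ℕ) : QDivPow q := Finsupp.single n 1

variable (q) in
noncomputable def coeff (n : ℕ) : QDivPow q →ₗ[k] k := Finsupp.lapply n

lemma divPow_zero : divPow q 0 = 1 := rfl

lemma coeff_divPow (m n : ℕ) : coeff q n (divPow q m) = if m = n then 1 else 0 :=
  Finsupp.single_apply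

lemma smul_divPow (c : k) (n : ℕ) : c • divPow q n = Finsupp.single n c :=
  Finsupp.smul_single_one n c

lemma divPow_mul_divPow (m n : ℕ) :
    divPow q m * divPow q n = qBinom k q (m + n) m • divPow q (m + n) := by
  refine (Dmul_single m n 1 1).trans ?_
  rw [mul_one, mul_one]
  exact (smul_divPow _ _).symm

variable (q) in
def IsScaledDivPow (f : QDivPow q) (n : ℕ) : Prop := ∃ c : k, c ≠ 0 ∧ f = c • divPow q n

lemma Dmon_eq_prod (b : ℕ → ℕ) (m : ℕ →₀ ℕ) :
    (Dmon q b m : QDivPow q) = m.prod fun i e => divPow q (b i) ^ e := by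
  refine (foldr_mul_eq_prod_range (fun i => divPow q (b i) ^ m i) _).trans
    (Finsupp.prod_of_support_subset m (fun i hi => ?_) _ fun _ _ => pow_zero _).symm
  exact Finset.mem_range.2 (Nat.lt_succ_of_le (Finset.le_sup (f := id) hi))

lemma sum_smul_Dmon_eq_aeval (b : ℕ → ℕ) (p : MvPolynomial ℕ k) :
    ∑ m ∈ p.support, p.coeff m • (Dmon q b m : QDivPow q)
      = MvPolynomial.aeval (divPow q ∘ b) p := by
  rw [MvPolynomial.aeval_def, MvPolynomial.eval₂_eq]
  exact Finset.sum_congr rfl fun m _ => by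
    rw [Dmon_eq_prod]; exact Algebra.smul_def (A := QDivPow q) _ _

end QDivPow

/-! ### Mixed radix expansions -/

section MixedRadix

open Finset

/-- `b` is the sequence of place values of a mixed radix system: the digit in place `i` ranges
over `[0, b (i + 1) / b i)`. -/
structure IsMixedRadix (b : ℕ → ℕ) : Prop where
  zero : b 0 = 1
  dvd_succ : ∀ i, b i ∣ b (i + 1)
  lt_succ : ∀ i, b i < b (i + 1)

def radixValue (b : ℕ → ℕ) (m : ℕ →₀ ℕ) : ℕ := m.sum fun i a => a * b i

def IsDigitVector (b : ℕ → ℕ) (m : ℕ →₀ ℕ) : Prop := ∀ i, m i < b (i + 1) / b i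

variable {b : ℕ → ℕ}

lemma radixValue_add (m m' : ℕ →₀ ℕ) :
    radixValue b (m + m') = radixValue b m + radixValue b m' :=
  Finsupp.sum_add_index' (fun _ => zero_mul _) fun _ _ _ => add_mul _ _ _

lemma radixValue_single (i a : ℕ) : radixValue b (Finsupp.single i a) = a * b i :=
  Finsupp.sum_single_index (zero_mul _)

lemma radixValue_eq_sum_range {m : ℕ →₀ ℕ} {N : ℕ} (h : ∀ i ∈ m.support, i < N) :
    radixValue b m = ∑ i ∈ range N, m i * b i :=
  Finsupp.sum_of_support_subset m (fun i hi => mem_range.2 (h i hi)) _ fun _ _ => zero_mul _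

lemma IsDigitVector.of_le {m m' : ℕ →₀ ℕ} (hm' : IsDigitVector b m') (h : m ≤ m') :
    IsDigitVector b m :=
  fun i => (h i).trans_lt (hm' i)

namespace IsMixedRadix

variable (hb : IsMixedRadix b)
include hb

lemma pos (i : ℕ) : 0 < b i := by
  cases i with
  | zero => rw [hb.zero]; exact one_pos
  | succ i => exact (Nat.zero_le _).trans_lt (hb.lt_succ i)

lemma self_lt (j : ℕ) : j < b j := by
  induction j with
  | zero => rw [hb.zero]; exact one_pos
  | succ j ih => exact (Nat.succ_le_of_lt ih).trans_lt (hb.lt_succ j)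

lemma div_mul_cancel (i : ℕ) : b (i + 1) / b i * b i = b (i + 1) :=
  Nat.div_mul_cancel (hb.dvd_succ i)

lemma one_lt_div (i : ℕ) : 1 < b (i + 1) / b i := by
  by_contra h
  have := hb.div_mul_cancel i
  have := Nat.mul_le_mul_right (b i) (not_lt.1 h)
  have := hb.lt_succ i
  omega

lemma dvd_of_le {i j : ℕ} (h : i ≤ j) : b i ∣ b j := by
  induction j, h using Nat.le_induction with
  | base => exact dvd_rfl
  | succ j _ ih => exact ih.trans (hb.dvd_succ j)

lemma isDigitVector_single {i a : ℕ} (h : a < b (i + 1) / b i) :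
    IsDigitVector b (Finsupp.single i a) := fun j => by
  rw [Finsupp.single_apply]
  split_ifs with hij
  · exact hij ▸ h
  · exact (hb.one_lt_div j).trans' one_pos

lemma sum_range_lt {m : ℕ →₀ ℕ} (hm : IsDigitVector b m) (j : ℕ) :
    ∑ i ∈ range j, m i * b i < b j := by
  induction j with
  | zero => rw [sum_range_zero, hb.zero]; exact one_pos
  | succ j ih =>
    rw [sum_range_succ, ← hb.div_mul_cancel j]
    have := Nat.mul_le_mul_right (b j) (Nat.succ_le_of_lt (hm j))
    rw [Nat.succ_mul] at this
    omega

lemma radixValue_mod {m : ℕ →₀ ℕ} (hm : IsDigitVector b m) (j : ℕ) :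
    radixValue b m % b j = ∑ i ∈ range j, m i * b i := by
  have hsupp : ∀ i ∈ m.support, i < j + (m.support.sup id + 1) := fun i hi =>
    Nat.lt_add_left j (Nat.lt_succ_of_le (le_sup (f := id) hi))
  obtain ⟨c, hc⟩ : b j ∣ ∑ x ∈ range (m.support.sup id + 1), m (j + x) * b (j + x) :=
    dvd_sum fun x _ => Dvd.dvd.mul_left (hb.dvd_of_le (Nat.le_add_right j x)) _
  rw [radixValue_eq_sum_range hsupp, sum_range_add, hc, Nat.add_mul_mod_self_left,
    Nat.mod_eq_of_lt (hb.sum_range_lt hm j)]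

theorem radixValue_injOn : Set.InjOn (radixValue b) {m | IsDigitVector b m} := by
  intro m hm m' hm' h
  ext j
  have h₁ := hb.radixValue_mod hm (j + 1)
  have h₁' := hb.radixValue_mod hm' (j + 1)
  rw [sum_range_succ, ← hb.radixValue_mod hm j, h] at h₁
  rw [sum_range_succ, ← hb.radixValue_mod hm' j] at h₁'
  exact Nat.eq_of_mul_eq_mul_right (hb.pos j) (by omega)

theorem exists_radixValue_eq (n : ℕ) : ∃ m, IsDigitVector b m ∧ radixValue b m = n := by
  set d : ℕ → ℕ := fun j => n / b j % (b (j + 1) / b j)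
  have hsupp : ∀ j, d j ≠ 0 → j ∈ range n := fun j hj => by
    by_contra h
    rw [mem_range, not_lt] at h
    exact hj (show n / b j % _ = 0 by
      rw [Nat.div_eq_of_lt (h.trans_lt (hb.self_lt j)), Nat.zero_mod])
  have hsum : ∀ j, ∑ i ∈ range j, d i * b i = n % b j := by
    intro j
    induction j with
    | zero => rw [sum_range_zero, hb.zero, Nat.mod_one]
    | succ j ih =>
      rw [sum_range_succ, ih, ← hb.div_mul_cancel j, Nat.mul_comm (b (j + 1) / b j), Nat.mod_mul,
        Nat.mul_comm (b j)]
  refine ⟨Finsupp.onFinset (range n) d hsupp, fun j => Nat.mod_lt _ (hb.one_lt_div j).le, ?_⟩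
  rw [radixValue_eq_sum_range fun i hi => mem_range.1 (Finsupp.support_onFinset_subset hi)]
  simp only [Finsupp.onFinset_apply]
  rw [hsum, Nat.mod_eq_of_lt (hb.self_lt n)]

lemma radixValue_mod_add_lt {m m' : ℕ →₀ ℕ} (h : IsDigitVector b (m + m')) (j : ℕ) :
    radixValue b m % b j + radixValue b m' % b j < b j := by
  rw [hb.radixValue_mod (h.of_le le_self_add) j, hb.radixValue_mod (h.of_le le_add_self) j,
    ← sum_add_distrib]
  simpa [add_mul] using hb.sum_range_lt h j

end IsMixedRadix

end MixedRadix

/-! ### The presentation -/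

namespace QDivPow

open MvPolynomial

noncomputable def radixIdeal (k : Type*) [CommRing k] (b : ℕ → ℕ) :
    Ideal (MvPolynomial ℕ k) :=
  Ideal.span (Set.range fun i => X i ^ (b (i + 1) / b i))

lemma monomial_mem_radixIdeal {k : Type*} [CommRing k] {b : ℕ → ℕ} {m : ℕ →₀ ℕ}
    (hm : ¬ IsDigitVector b m) (a : k) :
    monomial m a ∈ radixIdeal k b := by
  obtain ⟨i, hi⟩ := not_forall.1 hm
  have hle : Finsupp.single i (b (i + 1) / b i) ≤ m := Finsupp.single_le_iff.2 (not_lt.1 hi)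
  rw [← tsub_add_cancel_of_le hle, ← mul_one a, ← monomial_mul, ← X_pow_eq_monomial]
  exact Ideal.mul_mem_left _ _ (Ideal.subset_span ⟨i, rfl⟩)

variable {k : Type*} [Field k] {q : k} {b : ℕ → ℕ}

lemma IsScaledDivPow.mul {f g : QDivPow q} {m n : ℕ}
    (hf : IsScaledDivPow q f m) (hg : IsScaledDivPow q g n) (h : qBinom k q (m + n) m ≠ 0) :
    IsScaledDivPow q (f * g) (m + n) := by
  obtain ⟨c, hc, rfl⟩ := hf
  obtain ⟨c', hc', rfl⟩ := hg
  refine ⟨c * c' * qBinom k q (m + n) m, mul_ne_zero (mul_ne_zero hc hc') h, ?_⟩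
  rw [smul_mul_smul_comm, divPow_mul_divPow, smul_smul]

variable (hb : IsMixedRadix b)
  (hcarry : ∀ m n, qBinom k q (m + n) m ≠ 0 ↔ ∀ i, m % b i + n % b i < b i)
include hb hcarry

theorem isScaledDivPow_aeval_monomial {m : ℕ →₀ ℕ} (hm : IsDigitVector b m) :
    IsScaledDivPow q (aeval (divPow q ∘ b) (monomial m (1 : k))) (radixValue b m) := by
  have step : ∀ m m' : ℕ →₀ ℕ, IsDigitVector b (m + m') →
      IsScaledDivPow q (aeval (divPow q ∘ b) (monomial m (1 : k))) (radixValue b m) →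
      IsScaledDivPow q (aeval (divPow q ∘ b) (monomial m' (1 : k))) (radixValue b m') →
      IsScaledDivPow q (aeval (divPow q ∘ b) (monomial (m + m') (1 : k)))
        (radixValue b (m + m')) :=
    fun m m' h hm hm' => by
      rw [← mul_one (1 : k), ← monomial_mul, map_mul, radixValue_add]
      exact hm.mul hm' ((hcarry _ _).2 (hb.radixValue_mod_add_lt h))
  induction m using Finsupp.induction_linear with
  | zero => exact ⟨1, one_ne_zero, by simp [radixValue, divPow_zero]⟩
  | add m m' ihm ihm' =>
    exact step m m' hm (ihm (hm.of_le le_self_add)) (ihm' (hm.of_le le_add_self))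
  | single i a =>
    induction a with
    | zero => exact ⟨1, one_ne_zero, by simp [radixValue, divPow_zero]⟩
    | succ a ih =>
      rw [Finsupp.single_add] at hm ⊢
      refine step _ _ hm (ih (hm.of_le le_self_add)) ⟨1, one_ne_zero, ?_⟩
      rw [one_smul, radixValue_single, one_mul]
      exact aeval_X _ i

lemma aeval_X_pow_div (i : ℕ) :
    aeval (divPow q ∘ b) (X i ^ (b (i + 1) / b i) : MvPolynomial ℕ k) = 0 := by
  obtain ⟨e, he⟩ : ∃ e, b (i + 1) / b i = e + 1 :=
    ⟨_, (Nat.succ_pred_eq_of_pos (hb.one_lt_div i).le).symm⟩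
  have hb₁ : b (i + 1) = e * b i + b i := by rw [← hb.div_mul_cancel i, he, Nat.succ_mul]
  have hpos := hb.pos i
  have he₀ : 0 < e := by have := hb.one_lt_div i; omega
  have hcarry_top : ¬ (e * b i % b (i + 1) + b i % b (i + 1) < b (i + 1)) := by
    rw [Nat.mod_eq_of_lt (by omega), Nat.mod_eq_of_lt (by nlinarith)]
    omega
  obtain ⟨c, -, hc⟩ := isScaledDivPow_aeval_monomial hb hcarry
    (hb.isDigitVector_single (i := i) (he ▸ e.lt_succ_self : e < b (i + 1) / b i))
  rw [he, pow_succ, X_pow_eq_monomial, map_mul, hc, aeval_X, Function.comp_apply,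
    radixValue_single, smul_mul_assoc, divPow_mul_divPow,
    not_ne_iff.1 (mt (fun h => (hcarry _ _).1 h (i + 1)) hcarry_top), zero_smul, smul_zero]

theorem aeval_divPow_surjective : Function.Surjective (aeval (R := k) (divPow q ∘ b)) := by
  intro f
  induction f using Finsupp.induction_linear with
  | zero => exact ⟨0, map_zero _⟩
  | add f g hf hg =>
    obtain ⟨p, rfl⟩ := hf
    obtain ⟨p', rfl⟩ := hg
    exact ⟨p + p', map_add _ _ _⟩
  | single n a =>
    obtain ⟨m, hm, rfl⟩ := hb.exists_radixValue_eq n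
    obtain ⟨c, hc, hmc⟩ := isScaledDivPow_aeval_monomial hb hcarry hm
    refine ⟨monomial m (a * c⁻¹), ?_⟩
    rw [← mul_one (a * c⁻¹), ← smul_eq_mul, ← smul_monomial, map_smul, hmc, smul_smul,
      inv_mul_cancel_right₀ hc]
    exact smul_divPow _ _

theorem coeff_eq_zero_of_aeval_sum_monomial_eq_zero {S : Finset (ℕ →₀ ℕ)}
    (hS : ∀ m ∈ S, IsDigitVector b m) (a : (ℕ →₀ ℕ) → k)
    (h : aeval (divPow q ∘ b) (∑ m ∈ S, monomial m (a m)) = 0) : ∀ m ∈ S, a m = 0 := by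
  choose! c hc hmc using fun m (hm : IsDigitVector b m) =>
    isScaledDivPow_aeval_monomial hb hcarry (q := q) hm
  intro m₀ hm₀
  have hterm : ∀ m ∈ S, coeff q (radixValue b m₀) (aeval (divPow q ∘ b) (monomial m (a m)))
      = if m₀ = m then a m * c m else 0 := by
    intro m hm
    rw [show monomial m (a m) = a m • monomial m (1 : k) by
        rw [smul_monomial, smul_eq_mul, mul_one],
      map_smul, hmc m (hS m hm), smul_smul, map_smul, coeff_divPow, smul_eq_mul]
    by_cases h : m₀ = m
    · rw [if_pos (congrArg _ h.symm), if_pos h, mul_one]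
    · rw [if_neg fun h' => h (hb.radixValue_injOn (hS m₀ hm₀) (hS m hm) h'.symm), if_neg h,
        mul_zero]
  have := congrArg (coeff q (radixValue b m₀)) h
  rw [map_sum, map_sum, Finset.sum_congr rfl hterm, Finset.sum_ite_eq, if_pos hm₀,
    map_zero] at this
  exact (mul_eq_zero.1 this).resolve_right (hc m₀ (hS m₀ hm₀))

theorem ker_aeval_divPow : RingHom.ker (aeval (R := k) (divPow q ∘ b)) = radixIdeal k b := by
  classical
  set I := radixIdeal k b
  have hI : I ≤ RingHom.ker (aeval (R := k) (divPow q ∘ b)) :=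
    Ideal.span_le.2 (Set.range_subset_iff.2 (aeval_X_pow_div hb hcarry))
  refine le_antisymm (fun p hp => ?_) hI
  set S := p.support.filter (IsDigitVector b)
  have hsplit : p = ∑ m ∈ S, monomial m (p.coeff m)
      + ∑ m ∈ p.support.filter (¬ IsDigitVector b ·), monomial m (p.coeff m) := by
    rw [Finset.sum_filter_add_sum_filter_not]
    exact p.as_sum
  have hbad : ∑ m ∈ p.support.filter (¬ IsDigitVector b ·), monomial m (p.coeff m) ∈ I :=
    I.sum_mem fun m hm => monomial_mem_radixIdeal (Finset.mem_filter.1 hm).2 _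
  have hgood : aeval (divPow q ∘ b) (∑ m ∈ S, monomial m (p.coeff m)) = 0 := by
    rw [← RingHom.mem_ker, ← add_mem_cancel_right (hI hbad), ← hsplit]
    exact hp
  have hcoeff := coeff_eq_zero_of_aeval_sum_monomial_eq_zero hb hcarry
    (fun m hm => (Finset.mem_filter.1 hm).2) _ hgood
  rw [hsplit, Finset.sum_eq_zero fun m hm => by rw [hcoeff m hm, map_zero], zero_add]
  exact hbad

end QDivPow

/-! ### The place values `b_i` -/

section bSeq

variable {w ℓ : ℕ}

lemma bSeq_succ_succ (i : ℕ) : bSeq w ℓ (i + 2) = bSeq w ℓ (i + 1) * ℓ := by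
  simp only [bSeq, Nat.add_eq_zero_iff, one_ne_zero, OfNat.ofNat_ne_zero, and_false, if_false,
    Nat.add_sub_cancel, show i + 2 - 1 = i + 1 from rfl]
  split_ifs <;> ring

lemma bSeq_pos (hw : 0 < w) (hℓ : 0 < ℓ) (i : ℕ) : 0 < bSeq w ℓ i := by
  unfold bSeq
  split_ifs <;> positivity

lemma isMixedRadix_bSeq (hw : 0 < w) (hℓ : 1 < ℓ) : IsMixedRadix (bSeq w ℓ) where
  zero := rfl
  dvd_succ
    | 0 => by simp [bSeq]
    | i + 1 => bSeq_succ_succ i ▸ dvd_mul_right _ _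
  lt_succ
    | 0 => by
      show 1 < bSeq w ℓ 1
      unfold bSeq
      rw [if_neg one_ne_zero, Nat.sub_self, pow_zero, mul_one, pow_one]
      split_ifs <;> omega
    | i + 1 => by
      rw [bSeq_succ_succ]
      exact lt_mul_of_one_lt_right (bSeq_pos hw (by omega) _) hℓ

lemma forall_bSeq_iff (hw : 0 < w) {P : ℕ → Prop} (h1 : P 1) :
    (∀ i, P (bSeq w ℓ i)) ↔ ∀ i, P (w * ℓ ^ i) := by
  rcases Nat.lt_or_ge 1 w with hw1 | hw1
  · refine ⟨fun h i => by simpa [bSeq, hw1] using h (i + 1), fun h i => ?_⟩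
    cases i with
    | zero => exact h1
    | succ i => simpa [bSeq, hw1] using h i
  · obtain rfl : w = 1 := by omega
    refine forall_congr' fun i => ?_
    cases i <;> simp [bSeq]

end bSeq

theorem qdp_presentation_general {k : Type*} [Field k] (ℓ : ℕ) [CharP k ℓ] (hℓ : ℓ ≠ 0)
    (q : k) (w : ℕ) (hw : orderOf q = w) (hw0 : 0 < w) :
    let b := bSeq w ℓ;
    let I : Ideal (MvPolynomial ℕ k) :=
      Ideal.span (Set.range fun i : ℕ =>
        (MvPolynomial.X i : MvPolynomial ℕ k) ^ (b (i + 1) / b i));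
    let φ : MvPolynomial ℕ k → (ℕ →₀ k) := fun p =>
      ∑ m ∈ p.support, p.coeff m • Dmon q b m;
    ∃ ψ : (MvPolynomial ℕ k ⧸ I) →ₗ[k] (ℕ →₀ k),
      (∀ p : MvPolynomial ℕ k, ψ (Ideal.Quotient.mk I p) = φ p) ∧
      (∀ p p' : MvPolynomial ℕ k,
        ψ (Ideal.Quotient.mk I (p * p'))
          = Dmul q (ψ (Ideal.Quotient.mk I p)) (ψ (Ideal.Quotient.mk I p'))) ∧
      ψ (Ideal.Quotient.mk I 1) = Finsupp.single 0 1 ∧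
      Function.Bijective ψ := by
  intro b I φ
  have : NeZero ℓ := ⟨hℓ⟩
  have hℓp : ℓ.Prime := (CharP.char_is_prime_of_pos k ℓ).out
  have hb := isMixedRadix_bSeq hw0 hℓp.one_lt
  have hcarry (m n : ℕ) : qBinom k q (m + n) m ≠ 0 ↔ ∀ i, m % b i + n % b i < b i := by
    rw [qBinom_add_ne_zero_iff hℓp hw hw0,
      forall_bSeq_iff hw0 (P := fun B => m % B + n % B < B) (by simp [Nat.mod_one])]
  have hker := QDivPow.ker_aeval_divPow hb hcarry
  let ψ := Ideal.Quotient.liftₐ I (MvPolynomial.aeval (QDivPow.divPow q ∘ b))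
    fun p hp => by rwa [← RingHom.mem_ker, hker]
  have hψ : Function.Bijective ψ :=
    ⟨(Ideal.injective_lift_iff _).2 hker,
      Ideal.Quotient.lift_surjective_of_surjective _ _
        (QDivPow.aeval_divPow_surjective hb hcarry)⟩
  refine ⟨ψ.toLinearMap, fun p => (QDivPow.sum_smul_Dmon_eq_aeval b p).symm,
    fun p p' => ?_, map_one ψ, hψ⟩
  rw [map_mul]
  exact map_mul ψ (Ideal.Quotient.mk _ p) (Ideal.Quotient.mk _ p')

/-- Let `k` be a field of characteristic `ℓ > 0` and `q ∈ k` a root of unity of order `w`,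
and let `b` be the associated sequence. Then the `k`-algebra homomorphism
`k[y_0, y_1, …]/(y_i^{b_{i+1}/b_i}) → D` given by `y_i ↦ x^{[b_i]}` is an isomorphism
onto the `q`-divided power algebra `D` (realized as `ℕ →₀ k` with multiplication `Dmul`). -/
theorem qdp_presentation {k : Type*} [Field k] (ℓ : ℕ) [CharP k ℓ] (hℓ : ℓ ≠ 0)
    (q : k) (hq : q ≠ 0) (w : ℕ) (hw : orderOf q = w) (hw0 : 0 < w) :
    let b := bSeq w ℓ;
    let I : Ideal (MvPolynomial ℕ k) :=
      Ideal.span (Set.range fun i : ℕ =>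
        (MvPolynomial.X i : MvPolynomial ℕ k) ^ (b (i + 1) / b i));
    let φ : MvPolynomial ℕ k → (ℕ →₀ k) := fun p =>
      ∑ m ∈ p.support, p.coeff m • Dmon q b m;
    ∃ ψ : (MvPolynomial ℕ k ⧸ I) →ₗ[k] (ℕ →₀ k),
      (∀ p : MvPolynomial ℕ k, ψ (Ideal.Quotient.mk I p) = φ p) ∧
      (∀ p p' : MvPolynomial ℕ k,
        ψ (Ideal.Quotient.mk I (p * p'))
          = Dmul q (ψ (Ideal.Quotient.mk I p)) (ψ (Ideal.Quotient.mk I p'))) ∧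
      ψ (Ideal.Quotient.mk I 1) = Finsupp.single 0 1 ∧
      Function.Bijective ψ :=
  qdp_presentation_general ℓ hℓ q w hw hw0
end
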